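/- arXiv:1602.03298 — 6 statements merged into one kernel-verified Lean document; each statement's English description precedes it below -/
import Mathlib

section
/- Isoclinism of Lie crossed modules is an equivalence relation: it is reflexive, symmetric, and transitive. -/
/-- A Lie crossed module: a Lie algebra homomorphism `d : L₁ → L₀` together with
an action of `L₀` on `L₁` satisfying the crossed module axioms. -/
structure LieCM (K : Type*) (L₁ : Type*) (L₀ : Type*) [Field K]
    [LieRing L₁] [LieAlgebra K L₁] [LieRing L₀] [LieAlgebra K L₀] where
  d : L₁ →ₗ⁅K⁆ L₀
  act : L₀ →ₗ[K] L₁ →ₗ[K] L₁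
  act_lie₀ : ∀ (x y : L₀) (m : L₁), act ⁅x, y⁆ m = act x (act y m) - act y (act x m)
  act_lie₁ : ∀ (x : L₀) (a b : L₁), act x ⁅a, b⁆ = ⁅act x a, b⁆ + ⁅a, act x b⁆
  d_act : ∀ (x : L₀) (m : L₁), d (act x m) = ⁅x, d m⁆
  peiffer : ∀ a b : L₁, act (d a) b = ⁅a, b⁆

namespace LieCM

variable {K L₁ L₀ : Type*} [Field K] [LieRing L₁] [LieAlgebra K L₁]
  [LieRing L₀] [LieAlgebra K L₀] (M : LieCM K L₁ L₀)

/-- The fixed point ideal `L₁^{L₀}`. -/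
def fix : LieIdeal K L₁ where
  carrier := {m | ∀ x : L₀, M.act x m = 0}
  add_mem' := by intro a b ha hb x; rw [map_add, ha x, hb x, add_zero]
  zero_mem' := by intro x; simp
  smul_mem' := by intro c a ha x; rw [map_smul, ha x, smul_zero]
  lie_mem := by
    intro y m hm x
    rw [M.act_lie₁, hm x, lie_zero, add_zero, ← M.peiffer, hm]

/-- The ideal `St_{L₀}(L₁) ∩ Z(L₀)`. -/
def stz : LieIdeal K L₀ where
  carrier := {x | (∀ m : L₁, M.act x m = 0) ∧ ∀ y : L₀, ⁅x, y⁆ = 0}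
  add_mem' := by
    rintro a b ⟨ha1, ha2⟩ ⟨hb1, hb2⟩
    exact ⟨fun m => by rw [map_add, LinearMap.add_apply, ha1 m, hb1 m, add_zero],
      fun y => by rw [add_lie, ha2 y, hb2 y, add_zero]⟩
  zero_mem' := ⟨fun m => by simp, fun y => by simp⟩
  smul_mem' := by
    rintro c a ⟨ha1, ha2⟩
    exact ⟨fun m => by rw [map_smul, LinearMap.smul_apply, ha1 m, smul_zero],
      fun y => by rw [smul_lie, ha2 y, smul_zero]⟩
  lie_mem := by
    rintro y x ⟨hx1, hx2⟩
    have h : ⁅y, x⁆ = (0 : L₀) := by rw [← lie_skew, hx2 y, neg_zero]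
    rw [h]
    exact ⟨fun m => by simp, fun z => by simp⟩

/-- The displacement subalgebra `D_{L₀}(L₁)`. -/
def disp : LieSubalgebra K L₁ :=
  LieSubalgebra.lieSpan K L₁ {m | ∃ (x : L₀) (a : L₁), m = M.act x a}

set_option linter.unusedVariables false in
/-- The derived subalgebra `[L₀, L₀]`. -/
def der₀ (M : LieCM K L₁ L₀) : LieSubalgebra K L₀ :=
  LieSubalgebra.lieSpan K L₀ {x | ∃ a b : L₀, x = ⁅a, b⁆}

end LieCM

namespace LieCM

variable {K L₁ L₀ : Type*} [Field K] [LieRing L₁] [LieAlgebra K L₁]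
  [LieRing L₀] [LieAlgebra K L₀] (M : LieCM K L₁ L₀)

lemma act_mem_disp (x : L₀) (a : L₁) : M.act x a ∈ M.disp :=
  LieSubalgebra.subset_lieSpan ⟨x, a, rfl⟩

lemma lie_mem_der₀ (x y : L₀) : ⁅x, y⁆ ∈ M.der₀ :=
  LieSubalgebra.subset_lieSpan ⟨x, y, rfl⟩

lemma d_mem_der₀ {a : L₁} (ha : a ∈ M.disp) : M.d a ∈ M.der₀ := by
  have h : M.disp ≤ LieSubalgebra.comap M.d M.der₀ := by
    rw [LieCM.disp, LieSubalgebra.lieSpan_le]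
    rintro m ⟨x, b, rfl⟩
    show M.d (M.act x b) ∈ M.der₀
    rw [M.d_act]
    exact M.lie_mem_der₀ x (M.d b)
  exact h ha

lemma mk_eq_iff {N : LieIdeal K L₀} {x y : L₀} :
    (LieSubmodule.Quotient.mk (N := N) x = LieSubmodule.Quotient.mk y) ↔ x - y ∈ N :=
  Submodule.Quotient.eq N.toSubmodule

lemma mk_eq_iff' {N : LieIdeal K L₁} {x y : L₁} :
    (LieSubmodule.Quotient.mk (N := N) x = LieSubmodule.Quotient.mk y) ↔ x - y ∈ N :=
  Submodule.Quotient.eq N.toSubmodule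

lemma act_eq_of_mk_eq {x x' : L₀} {a a' : L₁}
    (hx : LieSubmodule.Quotient.mk (N := M.stz) x = LieSubmodule.Quotient.mk x')
    (ha : LieSubmodule.Quotient.mk (N := M.fix) a = LieSubmodule.Quotient.mk a') :
    M.act x a = M.act x' a' := by
  rw [mk_eq_iff] at hx
  rw [mk_eq_iff'] at ha
  have h1 : M.act (x - x') a = 0 := hx.1 a
  have h2 : M.act x' (a - a') = 0 := ha x'
  have e1 : M.act x a - M.act x' a = 0 := by
    rw [← LinearMap.sub_apply, ← map_sub]; exact h1
  have e2 : M.act x' a - M.act x' a' = 0 := by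
    rw [← map_sub]; exact h2
  have := congrArg₂ (· + ·) e1 e2
  simpa [sub_add_sub_cancel, sub_eq_zero] using this

lemma lie_eq_of_mk_eq {x x' y y' : L₀}
    (hx : LieSubmodule.Quotient.mk (N := M.stz) x = LieSubmodule.Quotient.mk x')
    (hy : LieSubmodule.Quotient.mk (N := M.stz) y = LieSubmodule.Quotient.mk y') :
    ⁅x, y⁆ = ⁅x', y'⁆ := by
  rw [mk_eq_iff] at hx hy
  have h1 : ⁅x - x', y⁆ = 0 := hx.2 y
  have h2 : ⁅x', y - y'⁆ = 0 := by
    rw [← lie_skew, hy.2 x', neg_zero]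
  have e1 : ⁅x, y⁆ - ⁅x', y⁆ = 0 := by rw [← sub_lie]; exact h1
  have e2 : ⁅x', y⁆ - ⁅x', y'⁆ = 0 := by rw [← lie_sub]; exact h2
  have := congrArg₂ (· + ·) e1 e2
  simpa [sub_add_sub_cancel, sub_eq_zero] using this

lemma d_fix_mem_stz {a : L₁} (ha : a ∈ M.fix) : M.d a ∈ M.stz := by
  constructor
  · intro m
    rw [M.peiffer]
    rw [← neg_neg ⁅a, m⁆, lie_skew, ← M.peiffer]
    rw [ha (M.d m), neg_zero]
  · intro y
    rw [← neg_neg ⁅M.d a, y⁆, lie_skew, ← M.d_act, ha y, map_zero, neg_zero]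

end LieCM

/-- An isoclinism between two Lie crossed modules: isomorphisms of the central
quotient crossed modules and of the commutator subcrossed modules, compatible
with the commutator maps `c₁` and `c₀`. -/
structure LieCM.Isoclinism {K L₁ L₀ L₁' L₀' : Type*} [Field K]
    [LieRing L₁] [LieAlgebra K L₁] [LieRing L₀] [LieAlgebra K L₀]
    [LieRing L₁'] [LieAlgebra K L₁'] [LieRing L₀'] [LieAlgebra K L₀']
    (M : LieCM K L₁ L₀) (M' : LieCM K L₁' L₀') where
  η₁ : (L₁ ⧸ M.fix) ≃ₗ⁅K⁆ (L₁' ⧸ M'.fix)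
  η₀ : (L₀ ⧸ M.stz) ≃ₗ⁅K⁆ (L₀' ⧸ M'.stz)
  η_d : ∀ (a : L₁) (a' : L₁'), η₁ (LieSubmodule.Quotient.mk a) = LieSubmodule.Quotient.mk a' →
    η₀ (LieSubmodule.Quotient.mk (M.d a)) = LieSubmodule.Quotient.mk (M'.d a')
  η_act : ∀ (x : L₀) (a : L₁) (x' : L₀') (a' : L₁'),
    η₀ (LieSubmodule.Quotient.mk x) = LieSubmodule.Quotient.mk x' → η₁ (LieSubmodule.Quotient.mk a) = LieSubmodule.Quotient.mk a' →
    η₁ (LieSubmodule.Quotient.mk (M.act x a)) = LieSubmodule.Quotient.mk (M'.act x' a')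
  ξ₁ : M.disp ≃ₗ⁅K⁆ M'.disp
  ξ₀ : M.der₀ ≃ₗ⁅K⁆ M'.der₀
  ξ_d : ∀ (a : L₁) (ha : a ∈ M.disp) (h : M.d a ∈ M.der₀),
    (ξ₀ ⟨M.d a, h⟩ : L₀') = M'.d (ξ₁ ⟨a, ha⟩)
  ξ_act : ∀ (x : L₀) (a : L₁) (hx : x ∈ M.der₀) (ha : a ∈ M.disp)
    (h : M.act x a ∈ M.disp),
    (ξ₁ ⟨M.act x a, h⟩ : L₁') = M'.act (ξ₀ ⟨x, hx⟩) (ξ₁ ⟨a, ha⟩)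
  comm₁ : ∀ (x : L₀) (a : L₁) (x' : L₀') (a' : L₁') (h : M.act x a ∈ M.disp),
    η₀ (LieSubmodule.Quotient.mk x) = LieSubmodule.Quotient.mk x' → η₁ (LieSubmodule.Quotient.mk a) = LieSubmodule.Quotient.mk a' →
    (ξ₁ ⟨M.act x a, h⟩ : L₁') = M'.act x' a'
  comm₀ : ∀ (x y : L₀) (x' y' : L₀') (h : ⁅x, y⁆ ∈ M.der₀),
    η₀ (LieSubmodule.Quotient.mk x) = LieSubmodule.Quotient.mk x' → η₀ (LieSubmodule.Quotient.mk y) = LieSubmodule.Quotient.mk y' →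
    (ξ₀ ⟨⁅x, y⁆, h⟩ : L₀') = ⁅x', y'⁆

namespace LieCM.Isoclinism

variable {K L₁ L₀ L₁' L₀' L₁'' L₀'' : Type*} [Field K]
    [LieRing L₁] [LieAlgebra K L₁] [LieRing L₀] [LieAlgebra K L₀]
    [LieRing L₁'] [LieAlgebra K L₁'] [LieRing L₀'] [LieAlgebra K L₀']
    [LieRing L₁''] [LieAlgebra K L₁''] [LieRing L₀''] [LieAlgebra K L₀'']
    {M : LieCM K L₁ L₀} {M' : LieCM K L₁' L₀'} {M'' : LieCM K L₁'' L₀''}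

/-- Reflexivity. -/
def refl (M : LieCM K L₁ L₀) : M.Isoclinism M where
  η₁ := LieEquiv.refl
  η₀ := LieEquiv.refl
  η_d := by
    intro a a' h
    simp only [LieEquiv.refl_apply] at h ⊢
    rw [LieCM.mk_eq_iff]
    rw [LieCM.mk_eq_iff'] at h
    rw [show M.d a - M.d a' = M.d (a - a') from (M.d.map_sub a a').symm]
    exact M.d_fix_mem_stz h
  η_act := by
    intro x a x' a' hx ha
    simp only [LieEquiv.refl_apply] at hx ha ⊢
    exact congrArg _ (M.act_eq_of_mk_eq hx ha)
  ξ₁ := LieEquiv.refl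
  ξ₀ := LieEquiv.refl
  ξ_d := by intro a ha h; rfl
  ξ_act := by intro x a hx ha h; rfl
  comm₁ := by
    intro x a x' a' h hx ha
    simp only [LieEquiv.refl_apply] at hx ha ⊢
    exact M.act_eq_of_mk_eq hx ha
  comm₀ := by
    intro x y x' y' h hx hy
    simp only [LieEquiv.refl_apply] at hx hy ⊢
    exact M.lie_eq_of_mk_eq hx hy

/-- Symmetry. -/
def symm (e : M.Isoclinism M') : M'.Isoclinism M where
  η₁ := e.η₁.symm
  η₀ := e.η₀.symm
  η_d := by
    intro a' a h
    have h' : e.η₁ (LieSubmodule.Quotient.mk a) = LieSubmodule.Quotient.mk a' := by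
      rw [← h, LieEquiv.apply_symm_apply]
    have := e.η_d a a' h'
    rw [← this, LieEquiv.symm_apply_apply]
  η_act := by
    intro x' a' x a hx ha
    have hx' : e.η₀ (LieSubmodule.Quotient.mk x) = LieSubmodule.Quotient.mk x' := by
      rw [← hx, LieEquiv.apply_symm_apply]
    have ha' : e.η₁ (LieSubmodule.Quotient.mk a) = LieSubmodule.Quotient.mk a' := by
      rw [← ha, LieEquiv.apply_symm_apply]
    have := e.η_act x a x' a' hx' ha'
    rw [← this, LieEquiv.symm_apply_apply]
  ξ₁ := e.ξ₁.symm
  ξ₀ := e.ξ₀.symm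
  ξ_d := by
    intro a' ha' h'
    set p := e.ξ₁.symm ⟨a', ha'⟩ with hp
    have hpa : e.ξ₁ p = ⟨a', ha'⟩ := by rw [hp, LieEquiv.apply_symm_apply]
    have hda : M.d (p : L₁) ∈ M.der₀ := M.d_mem_der₀ p.2
    have key : e.ξ₀ ⟨M.d (p : L₁), hda⟩ = ⟨M'.d a', h'⟩ := by
      apply Subtype.ext
      have := e.ξ_d (p : L₁) p.2 hda
      rw [show (⟨(p : L₁), p.2⟩ : M.disp) = p from rfl, hpa] at this
      exact this
    rw [← key, LieEquiv.symm_apply_apply]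
  ξ_act := by
    intro x' a' hx' ha' h'
    set q := e.ξ₀.symm ⟨x', hx'⟩ with hq
    set p := e.ξ₁.symm ⟨a', ha'⟩ with hp
    have hmem : M.act (q : L₀) (p : L₁) ∈ M.disp := M.act_mem_disp _ _
    have key : e.ξ₁ ⟨M.act (q : L₀) (p : L₁), hmem⟩ = ⟨M'.act x' a', h'⟩ := by
      apply Subtype.ext
      have := e.ξ_act (q : L₀) (p : L₁) q.2 p.2 hmem
      have hq2 : e.ξ₀ q = ⟨x', hx'⟩ := by rw [hq]; exact e.ξ₀.apply_symm_apply _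
      have hp2 : e.ξ₁ p = ⟨a', ha'⟩ := by rw [hp]; exact e.ξ₁.apply_symm_apply _
      rw [show (⟨(q : L₀), q.2⟩ : M.der₀) = q from rfl,
        show (⟨(p : L₁), p.2⟩ : M.disp) = p from rfl, hq2, hp2] at this
      exact this
    rw [← key, LieEquiv.symm_apply_apply]
  comm₁ := by
    intro x' a' x a h' hx ha
    have hx' : e.η₀ (LieSubmodule.Quotient.mk x) = LieSubmodule.Quotient.mk x' := by
      rw [← hx, LieEquiv.apply_symm_apply]
    have ha' : e.η₁ (LieSubmodule.Quotient.mk a) = LieSubmodule.Quotient.mk a' := by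
      rw [← ha, LieEquiv.apply_symm_apply]
    have hmem : M.act x a ∈ M.disp := M.act_mem_disp _ _
    have key : e.ξ₁ ⟨M.act x a, hmem⟩ = ⟨M'.act x' a', h'⟩ :=
      Subtype.ext (e.comm₁ x a x' a' hmem hx' ha')
    rw [← key, LieEquiv.symm_apply_apply]
  comm₀ := by
    intro x' y' x y h' hx hy
    have hx' : e.η₀ (LieSubmodule.Quotient.mk x) = LieSubmodule.Quotient.mk x' := by
      rw [← hx, LieEquiv.apply_symm_apply]
    have hy' : e.η₀ (LieSubmodule.Quotient.mk y) = LieSubmodule.Quotient.mk y' := by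
      rw [← hy, LieEquiv.apply_symm_apply]
    have hmem : ⁅x, y⁆ ∈ M.der₀ := M.lie_mem_der₀ _ _
    have key : e.ξ₀ ⟨⁅x, y⁆, hmem⟩ = ⟨⁅x', y'⁆, h'⟩ :=
      Subtype.ext (e.comm₀ x y x' y' hmem hx' hy')
    rw [← key, LieEquiv.symm_apply_apply]

/-- Transitivity. -/
def trans (e : M.Isoclinism M') (f : M'.Isoclinism M'') : M.Isoclinism M'' where
  η₁ := e.η₁.trans f.η₁
  η₀ := e.η₀.trans f.η₀
  η_d := by
    intro a a'' h
    obtain ⟨a', ha'⟩ := Submodule.Quotient.mk_surjective _ (e.η₁ (LieSubmodule.Quotient.mk a))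
    have ha' : e.η₁ (LieSubmodule.Quotient.mk a) = LieSubmodule.Quotient.mk a' := ha'.symm
    have h2 : f.η₁ (LieSubmodule.Quotient.mk a') = LieSubmodule.Quotient.mk a'' := by
      rw [← ha']; exact h
    show f.η₀ (e.η₀ _) = _
    rw [e.η_d a a' ha']
    exact f.η_d a' a'' h2
  η_act := by
    intro x a x'' a'' hx ha
    obtain ⟨x', hx'⟩ := Submodule.Quotient.mk_surjective _ (e.η₀ (LieSubmodule.Quotient.mk x))
    obtain ⟨a', ha'⟩ := Submodule.Quotient.mk_surjective _ (e.η₁ (LieSubmodule.Quotient.mk a))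
    have hx' : e.η₀ (LieSubmodule.Quotient.mk x) = LieSubmodule.Quotient.mk x' := hx'.symm
    have ha' : e.η₁ (LieSubmodule.Quotient.mk a) = LieSubmodule.Quotient.mk a' := ha'.symm
    have hx2 : f.η₀ (LieSubmodule.Quotient.mk x') = LieSubmodule.Quotient.mk x'' := by
      rw [← hx']; exact hx
    have ha2 : f.η₁ (LieSubmodule.Quotient.mk a') = LieSubmodule.Quotient.mk a'' := by
      rw [← ha']; exact ha
    show f.η₁ (e.η₁ _) = _
    rw [e.η_act x a x' a' hx' ha']
    exact f.η_act x' a' x'' a'' hx2 ha2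
  ξ₁ := e.ξ₁.trans f.ξ₁
  ξ₀ := e.ξ₀.trans f.ξ₀
  ξ_d := by
    intro a ha h
    set b := e.ξ₁ ⟨a, ha⟩ with hb
    have hdb : M'.d (b : L₁') ∈ M'.der₀ := M'.d_mem_der₀ b.2
    have key : e.ξ₀ ⟨M.d a, h⟩ = ⟨M'.d (b : L₁'), hdb⟩ :=
      Subtype.ext (e.ξ_d a ha h)
    show (f.ξ₀ (e.ξ₀ _) : L₀'') = _
    rw [key]
    have := f.ξ_d (b : L₁') b.2 hdb
    rw [show (⟨(b : L₁'), b.2⟩ : M'.disp) = b from rfl] at this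
    exact this
  ξ_act := by
    intro x a hx ha h
    set q := e.ξ₀ ⟨x, hx⟩ with hq
    set b := e.ξ₁ ⟨a, ha⟩ with hb
    have hmem : M'.act (q : L₀') (b : L₁') ∈ M'.disp := M'.act_mem_disp _ _
    have key : e.ξ₁ ⟨M.act x a, h⟩ = ⟨M'.act (q : L₀') (b : L₁'), hmem⟩ :=
      Subtype.ext (e.ξ_act x a hx ha h)
    show (f.ξ₁ (e.ξ₁ _) : L₁'') = _
    rw [key]
    have := f.ξ_act (q : L₀') (b : L₁') q.2 b.2 hmem
    rw [show (⟨(q : L₀'), q.2⟩ : M'.der₀) = q from rfl,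
      show (⟨(b : L₁'), b.2⟩ : M'.disp) = b from rfl] at this
    exact this
  comm₁ := by
    intro x a x'' a'' h hx ha
    obtain ⟨x', hx'⟩ := Submodule.Quotient.mk_surjective _ (e.η₀ (LieSubmodule.Quotient.mk x))
    obtain ⟨a', ha'⟩ := Submodule.Quotient.mk_surjective _ (e.η₁ (LieSubmodule.Quotient.mk a))
    have hx' : e.η₀ (LieSubmodule.Quotient.mk x) = LieSubmodule.Quotient.mk x' := hx'.symm
    have ha' : e.η₁ (LieSubmodule.Quotient.mk a) = LieSubmodule.Quotient.mk a' := ha'.symm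
    have hx2 : f.η₀ (LieSubmodule.Quotient.mk x') = LieSubmodule.Quotient.mk x'' := by
      rw [← hx']; exact hx
    have ha2 : f.η₁ (LieSubmodule.Quotient.mk a') = LieSubmodule.Quotient.mk a'' := by
      rw [← ha']; exact ha
    have hmem : M'.act x' a' ∈ M'.disp := M'.act_mem_disp _ _
    have key : e.ξ₁ ⟨M.act x a, h⟩ = ⟨M'.act x' a', hmem⟩ :=
      Subtype.ext (e.comm₁ x a x' a' h hx' ha')
    show (f.ξ₁ (e.ξ₁ _) : L₁'') = _
    rw [key]
    exact f.comm₁ x' a' x'' a'' hmem hx2 ha2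
  comm₀ := by
    intro x y x'' y'' h hx hy
    obtain ⟨x', hx'⟩ := Submodule.Quotient.mk_surjective _ (e.η₀ (LieSubmodule.Quotient.mk x))
    obtain ⟨y', hy'⟩ := Submodule.Quotient.mk_surjective _ (e.η₀ (LieSubmodule.Quotient.mk y))
    have hx' : e.η₀ (LieSubmodule.Quotient.mk x) = LieSubmodule.Quotient.mk x' := hx'.symm
    have hy' : e.η₀ (LieSubmodule.Quotient.mk y) = LieSubmodule.Quotient.mk y' := hy'.symm
    have hx2 : f.η₀ (LieSubmodule.Quotient.mk x') = LieSubmodule.Quotient.mk x'' := by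
      rw [← hx']; exact hx
    have hy2 : f.η₀ (LieSubmodule.Quotient.mk y') = LieSubmodule.Quotient.mk y'' := by
      rw [← hy']; exact hy
    have hmem : ⁅x', y'⁆ ∈ M'.der₀ := M'.lie_mem_der₀ _ _
    have key : e.ξ₀ ⟨⁅x, y⁆, h⟩ = ⟨⁅x', y'⁆, hmem⟩ :=
      Subtype.ext (e.comm₀ x y x' y' h hx' hy')
    show (f.ξ₀ (e.ξ₀ _) : L₀'') = _
    rw [key]
    exact f.comm₀ x' y' x'' y'' hmem hx2 hy2

end LieCM.Isoclinism

theorem isoclinism_equivalence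
    {K LA₁ LA₀ LB₁ LB₀ LC₁ LC₀ : Type*} [Field K]
    [LieRing LA₁] [LieAlgebra K LA₁] [LieRing LA₀] [LieAlgebra K LA₀]
    [LieRing LB₁] [LieAlgebra K LB₁] [LieRing LB₀] [LieAlgebra K LB₀]
    [LieRing LC₁] [LieAlgebra K LC₁] [LieRing LC₀] [LieAlgebra K LC₀]
    (A : LieCM K LA₁ LA₀) (B : LieCM K LB₁ LB₀) (C : LieCM K LC₁ LC₀) :
    Nonempty (A.Isoclinism A) ∧
    (Nonempty (A.Isoclinism B) → Nonempty (B.Isoclinism A)) ∧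
    (Nonempty (A.Isoclinism B) → Nonempty (B.Isoclinism C) →
      Nonempty (A.Isoclinism C)) := by
  exact ⟨⟨.refl A⟩,
    fun h => h.elim fun e => ⟨e.symm⟩,
    fun h h' => h.elim fun e => h'.elim fun f => ⟨e.trans f⟩⟩
end

section
/- Let d : L₁ → L₀ be a Lie crossed module and M : M₁ → M₀ a subcrossed module such that L₁ = M₁ ⊕ L₁^{L₀} and L₀ = M₀ ⊕ (St_{L₀}(L₁) ∩ Z(L₀)). Then St_{M₀}(M₁) ∩ Z(M₀) = M₀ ∩ (St_{L₀}(L₁) ∩ Z(L₀)). -/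
theorem sub_stz_eq_inter_stz {K L₁ L₀ : Type*} [Field K] [LieRing L₁] [LieAlgebra K L₁]
    [LieRing L₀] [LieAlgebra K L₀] (M : LieCM K L₁ L₀)
    (M₁ : LieSubalgebra K L₁) (M₀ : LieSubalgebra K L₀)
    (hd : ∀ a ∈ M₁, M.d a ∈ M₀) (hact : ∀ x ∈ M₀, ∀ a ∈ M₁, M.act x a ∈ M₁)
    (hdec₁ : ∀ a : L₁, ∃ m z, m ∈ M₁ ∧ z ∈ M.fix ∧ a = m + z)
    (huniq₁ : ∀ a ∈ M₁, a ∈ M.fix → a = 0)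
    (hdec₀ : ∀ x : L₀, ∃ m z, m ∈ M₀ ∧ z ∈ M.stz ∧ x = m + z)
    (huniq₀ : ∀ x ∈ M₀, x ∈ M.stz → x = 0) :
    {x : L₀ | x ∈ M₀ ∧ (∀ a ∈ M₁, M.act x a = 0) ∧ ∀ y ∈ M₀, ⁅x, y⁆ = 0} =
      {x : L₀ | x ∈ M₀ ∧ x ∈ M.stz} := by
  ext x
  simp only [Set.mem_setOf_eq]
  constructor
  · rintro ⟨hx0, hx1, hx2⟩
    refine ⟨hx0, ?_, ?_⟩
    · intro m
      obtain ⟨m₁, z, hm₁, hz, rfl⟩ := hdec₁ m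
      rw [map_add, hx1 m₁ hm₁, hz x, add_zero]
    · intro y
      obtain ⟨m₀, z, hm₀, hz, rfl⟩ := hdec₀ y
      have : ⁅x, z⁆ = 0 := by rw [← lie_skew, hz.2 x, neg_zero]
      rw [lie_add, hx2 m₀ hm₀, this, add_zero]
  · rintro ⟨hx0, hx1, hx2⟩
    exact ⟨hx0, fun a _ => hx1 a, fun y _ => hx2 y⟩
end

section
/- If L : L₁ → L₀ is a Lie crossed module and M : M₁ → M₀ is a subcrossed module with L = M ⊕ Z(L) (i.e., L₁ = M₁ ⊕ L₁^{L₀} and L₀ = M₀ ⊕ (St_{L₀}(L₁) ∩ Z(L₀))), then L is isoclinic to M. -/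
/-- The restriction of a Lie crossed module to a subcrossed module `(M₁, M₀)`. -/
def LieCM.restrict {K L₁ L₀ : Type*} [Field K] [LieRing L₁] [LieAlgebra K L₁]
    [LieRing L₀] [LieAlgebra K L₀] (M : LieCM K L₁ L₀)
    (M₁ : LieSubalgebra K L₁) (M₀ : LieSubalgebra K L₀)
    (hd : ∀ a ∈ M₁, M.d a ∈ M₀)
    (hact : ∀ x ∈ M₀, ∀ a ∈ M₁, M.act x a ∈ M₁) : LieCM K M₁ M₀ where
  d :=
    { toFun := fun a => ⟨M.d a, hd a a.2⟩
      map_add' := fun a b => Subtype.ext (by simp)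
      map_smul' := fun c a => Subtype.ext (by
        change M.d (c • (a : L₁)) = c • M.d (a : L₁); rw [map_smul])
      map_lie' := fun {a b} => Subtype.ext (by simp) }
  act := LinearMap.mk₂ K (fun x a => ⟨M.act (x : L₀) (a : L₁), hact x x.2 a a.2⟩)
    (fun x y a => Subtype.ext (by simp [SetLike.val_smul]))
    (fun c x a => Subtype.ext (by
      change M.act (c • (x : L₀)) (a : L₁) = c • M.act (x : L₀) (a : L₁)
      rw [map_smul, LinearMap.smul_apply]))
    (fun x a b => Subtype.ext (by simp))
    (fun c x a => Subtype.ext (by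
      change M.act (x : L₀) (c • (a : L₁)) = c • M.act (x : L₀) (a : L₁)
      rw [map_smul]))
  act_lie₀ := fun x y m => Subtype.ext (by
    simp only [LinearMap.mk₂_apply, AddSubgroupClass.coe_sub, LieSubalgebra.coe_bracket]
    exact M.act_lie₀ x y m)
  act_lie₁ := fun x a b => Subtype.ext (by
    simp only [LinearMap.mk₂_apply, AddMemClass.coe_add, LieSubalgebra.coe_bracket]
    exact M.act_lie₁ x a b)
  d_act := fun x m => Subtype.ext (by
    simp only [LinearMap.mk₂_apply, LieHom.coe_mk, LieSubalgebra.coe_bracket]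
    exact M.d_act x m)
  peiffer := fun a b => Subtype.ext (by
    simp only [LinearMap.mk₂_apply, LieHom.coe_mk, LieSubalgebra.coe_bracket]
    exact M.peiffer a b)

section IsoclinicAux

variable {K L₁ L₀ : Type*} [Field K] [LieRing L₁] [LieAlgebra K L₁]
  [LieRing L₀] [LieAlgebra K L₀]

/-- The quotient map by a Lie ideal, as a Lie algebra homomorphism. -/
def lieQuotMkHom {L : Type*} [LieRing L] [LieAlgebra K L] (I : LieIdeal K L) :
    L →ₗ⁅K⁆ L ⧸ I :=
  { (I : LieSubmodule K L L).toSubmodule.mkQ with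
    toFun := LieSubmodule.Quotient.mk
    map_lie' := fun {_ _} => rfl }

@[simp] lemma lieQuotMkHom_apply {L : Type*} [LieRing L] [LieAlgebra K L] (I : LieIdeal K L)
    (x : L) : lieQuotMkHom I x = LieSubmodule.Quotient.mk x := rfl

variable (M : LieCM K L₁ L₀)

lemma LieCM.lie_fix_zero {z : L₁} (hz : z ∈ M.fix) (b : L₁) : ⁅z, b⁆ = 0 := by
  rw [← lie_skew, ← M.peiffer, hz, neg_zero]

lemma LieCM.d_fix_mem_stz_s12 {z : L₁} (hz : z ∈ M.fix) : M.d z ∈ M.stz := by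
  refine ⟨fun b => ?_, fun y => ?_⟩
  · rw [M.peiffer, M.lie_fix_zero hz]
  · rw [← lie_skew, ← M.d_act, hz y, map_zero, neg_zero]

variable (M₁ : LieSubalgebra K L₁) (M₀ : LieSubalgebra K L₀)

/-- If an element is killed by all of `M₀` and `L₀ = M₀ + stz`, it is in the fixed ideal. -/
lemma mem_fix_of (hdec₀ : ∀ x : L₀, ∃ m z, m ∈ M₀ ∧ z ∈ M.stz ∧ x = m + z)
    {a : L₁} (h : ∀ x ∈ M₀, M.act x a = 0) : a ∈ M.fix := by
  intro x
  obtain ⟨m, z, hm, hz, rfl⟩ := hdec₀ x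
  rw [map_add, LinearMap.add_apply, h m hm, hz.1 a, add_zero]

lemma mem_stz_of (hdec₁ : ∀ a : L₁, ∃ m z, m ∈ M₁ ∧ z ∈ M.fix ∧ a = m + z)
    (hdec₀ : ∀ x : L₀, ∃ m z, m ∈ M₀ ∧ z ∈ M.stz ∧ x = m + z)
    {x : L₀} (h1 : ∀ a ∈ M₁, M.act x a = 0) (h2 : ∀ y ∈ M₀, ⁅x, y⁆ = 0) : x ∈ M.stz := by
  refine ⟨fun a => ?_, fun y => ?_⟩
  · obtain ⟨m, z, hm, hz, rfl⟩ := hdec₁ a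
    rw [map_add, h1 m hm, hz x, add_zero]
  · obtain ⟨m, z, hm, hz, rfl⟩ := hdec₀ y
    rw [lie_add, h2 m hm, zero_add, ← lie_skew, hz.2 x, neg_zero]

lemma key_act {m₀ z₀ : L₀} {m₁ z₁ : L₁} (hz₀ : z₀ ∈ M.stz) (hz₁ : z₁ ∈ M.fix) :
    M.act (m₀ + z₀) (m₁ + z₁) = M.act m₀ m₁ := by
  rw [map_add, hz₁ _, add_zero, map_add, LinearMap.add_apply, hz₀.1 _, add_zero]

lemma key_lie {m₀ z₀ m₀' z₀' : L₀} (hz₀ : z₀ ∈ M.stz) (hz₀' : z₀' ∈ M.stz) :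
    ⁅m₀ + z₀, m₀' + z₀'⁆ = ⁅m₀, m₀'⁆ := by
  rw [add_lie, hz₀.2 _, add_zero, lie_add, ← lie_skew m₀ z₀', hz₀'.2 m₀, neg_zero, add_zero]

end IsoclinicAux
section IsoclinicAux2

variable {K L₁ L₀ : Type*} [Field K] [LieRing L₁] [LieAlgebra K L₁]
  [LieRing L₀] [LieAlgebra K L₀] (M : LieCM K L₁ L₀)
  (M₁ : LieSubalgebra K L₁) (M₀ : LieSubalgebra K L₀)

/-- `M₁ → L₁ ⧸ fix`. -/
def theta1 : M₁ →ₗ⁅K⁆ L₁ ⧸ M.fix := (lieQuotMkHom M.fix).comp M₁.incl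

@[simp] lemma theta1_apply (m : M₁) :
    theta1 M M₁ m = LieSubmodule.Quotient.mk (m : L₁) := rfl

lemma theta1_bij (hdec₁ : ∀ a : L₁, ∃ m z, m ∈ M₁ ∧ z ∈ M.fix ∧ a = m + z)
    (huniq₁ : ∀ a ∈ M₁, a ∈ M.fix → a = 0) : Function.Bijective (theta1 M M₁) := by
  constructor
  · intro u v huv
    have h : (u : L₁) - (v : L₁) ∈ M.fix := (Submodule.Quotient.eq _).mp huv
    exact Subtype.ext (sub_eq_zero.mp (huniq₁ _ (sub_mem u.2 v.2) h))
  · intro q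
    obtain ⟨a, rfl⟩ := Submodule.Quotient.mk_surjective _ q
    obtain ⟨m, z, hm, hz, rfl⟩ := hdec₁ a
    refine ⟨⟨m, hm⟩, ?_⟩
    show LieSubmodule.Quotient.mk (m : L₁) = LieSubmodule.Quotient.mk (m + z)
    apply (Submodule.Quotient.eq _).mpr
    show m - (m + z) ∈ M.fix
    have : m - (m + z) = -z := by abel
    rw [this]
    exact neg_mem hz

/-- `M₀ → L₀ ⧸ stz`. -/
def theta0 : M₀ →ₗ⁅K⁆ L₀ ⧸ M.stz := (lieQuotMkHom M.stz).comp M₀.incl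

@[simp] lemma theta0_apply (m : M₀) :
    theta0 M M₀ m = LieSubmodule.Quotient.mk (m : L₀) := rfl

lemma theta0_bij (hdec₀ : ∀ x : L₀, ∃ m z, m ∈ M₀ ∧ z ∈ M.stz ∧ x = m + z)
    (huniq₀ : ∀ x ∈ M₀, x ∈ M.stz → x = 0) : Function.Bijective (theta0 M M₀) := by
  constructor
  · intro u v huv
    have h : (u : L₀) - (v : L₀) ∈ M.stz := (Submodule.Quotient.eq _).mp huv
    exact Subtype.ext (sub_eq_zero.mp (huniq₀ _ (sub_mem u.2 v.2) h))
  · intro q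
    obtain ⟨a, rfl⟩ := Submodule.Quotient.mk_surjective _ q
    obtain ⟨m, z, hm, hz, rfl⟩ := hdec₀ a
    refine ⟨⟨m, hm⟩, ?_⟩
    show LieSubmodule.Quotient.mk (m : L₀) = LieSubmodule.Quotient.mk (m + z)
    apply (Submodule.Quotient.eq _).mpr
    show m - (m + z) ∈ M.stz
    have : m - (m + z) = -z := by abel
    rw [this]
    exact neg_mem hz

variable (hd : ∀ a ∈ M₁, M.d a ∈ M₀) (hact : ∀ x ∈ M₀, ∀ a ∈ M₁, M.act x a ∈ M₁)

lemma restrict_fix_eq_zero (hdec₀ : ∀ x : L₀, ∃ m z, m ∈ M₀ ∧ z ∈ M.stz ∧ x = m + z)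
    (huniq₁ : ∀ a ∈ M₁, a ∈ M.fix → a = 0)
    {m : M₁} (h : m ∈ (M.restrict M₁ M₀ hd hact).fix) : m = 0 := by
  refine Subtype.ext (huniq₁ _ m.2 (mem_fix_of M M₀ hdec₀ fun x hx => ?_))
  exact congrArg Subtype.val (h ⟨x, hx⟩)

lemma restrict_stz_eq_zero (hdec₁ : ∀ a : L₁, ∃ m z, m ∈ M₁ ∧ z ∈ M.fix ∧ a = m + z)
    (hdec₀ : ∀ x : L₀, ∃ m z, m ∈ M₀ ∧ z ∈ M.stz ∧ x = m + z)
    (huniq₀ : ∀ x ∈ M₀, x ∈ M.stz → x = 0)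
    {x : M₀} (h : x ∈ (M.restrict M₁ M₀ hd hact).stz) : x = 0 := by
  refine Subtype.ext (huniq₀ _ x.2 (mem_stz_of M M₁ M₀ hdec₁ hdec₀
    (fun a ha => ?_) (fun y hy => ?_)))
  · exact congrArg Subtype.val (h.1 ⟨a, ha⟩)
  · exact congrArg Subtype.val (h.2 ⟨y, hy⟩)

/-- `M₁ → M₁ ⧸ fix'`. -/
def phi1 : M₁ →ₗ⁅K⁆ M₁ ⧸ (M.restrict M₁ M₀ hd hact).fix :=
  lieQuotMkHom (M.restrict M₁ M₀ hd hact).fix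

lemma phi1_bij (hdec₀ : ∀ x : L₀, ∃ m z, m ∈ M₀ ∧ z ∈ M.stz ∧ x = m + z)
    (huniq₁ : ∀ a ∈ M₁, a ∈ M.fix → a = 0) :
    Function.Bijective (phi1 M M₁ M₀ hd hact) := by
  constructor
  · intro u v huv
    have h : u - v ∈ (M.restrict M₁ M₀ hd hact).fix := (Submodule.Quotient.eq _).mp huv
    exact sub_eq_zero.mp (restrict_fix_eq_zero M M₁ M₀ hd hact hdec₀ huniq₁ h)
  · exact Submodule.Quotient.mk_surjective _

/-- `M₀ → M₀ ⧸ stz'`. -/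
def phi0 : M₀ →ₗ⁅K⁆ M₀ ⧸ (M.restrict M₁ M₀ hd hact).stz :=
  lieQuotMkHom (M.restrict M₁ M₀ hd hact).stz

lemma phi0_bij (hdec₁ : ∀ a : L₁, ∃ m z, m ∈ M₁ ∧ z ∈ M.fix ∧ a = m + z)
    (hdec₀ : ∀ x : L₀, ∃ m z, m ∈ M₀ ∧ z ∈ M.stz ∧ x = m + z)
    (huniq₀ : ∀ x ∈ M₀, x ∈ M.stz → x = 0) :
    Function.Bijective (phi0 M M₁ M₀ hd hact) := by
  constructor
  · intro u v huv
    have h : u - v ∈ (M.restrict M₁ M₀ hd hact).stz := (Submodule.Quotient.eq _).mp huv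
    exact sub_eq_zero.mp (restrict_stz_eq_zero M M₁ M₀ hd hact hdec₁ hdec₀ huniq₀ h)
  · exact Submodule.Quotient.mk_surjective _

end IsoclinicAux2
section IsoclinicAux3

variable {K L₁ L₀ : Type*} [Field K] [LieRing L₁] [LieAlgebra K L₁]
  [LieRing L₀] [LieAlgebra K L₀] (M : LieCM K L₁ L₀)
  (M₁ : LieSubalgebra K L₁) (M₀ : LieSubalgebra K L₀)
  (hd : ∀ a ∈ M₁, M.d a ∈ M₀) (hact : ∀ x ∈ M₀, ∀ a ∈ M₁, M.act x a ∈ M₁)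
  (hdec₁ : ∀ a : L₁, ∃ m z, m ∈ M₁ ∧ z ∈ M.fix ∧ a = m + z)
  (huniq₁ : ∀ a ∈ M₁, a ∈ M.fix → a = 0)
  (hdec₀ : ∀ x : L₀, ∃ m z, m ∈ M₀ ∧ z ∈ M.stz ∧ x = m + z)
  (huniq₀ : ∀ x ∈ M₀, x ∈ M.stz → x = 0)

/-- The equivalence `L₁ ⧸ fix ≃ M₁ ⧸ fix'`. -/
noncomputable def eta1 : (L₁ ⧸ M.fix) ≃ₗ⁅K⁆ (M₁ ⧸ (M.restrict M₁ M₀ hd hact).fix) :=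
  (LieEquiv.ofBijective _ (theta1_bij M M₁ hdec₁ huniq₁)).symm.trans
    (LieEquiv.ofBijective _ (phi1_bij M M₁ M₀ hd hact hdec₀ huniq₁))

/-- The equivalence `L₀ ⧸ stz ≃ M₀ ⧸ stz'`. -/
noncomputable def eta0 : (L₀ ⧸ M.stz) ≃ₗ⁅K⁆ (M₀ ⧸ (M.restrict M₁ M₀ hd hact).stz) :=
  (LieEquiv.ofBijective _ (theta0_bij M M₀ hdec₀ huniq₀)).symm.trans
    (LieEquiv.ofBijective _ (phi0_bij M M₁ M₀ hd hact hdec₁ hdec₀ huniq₀))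

lemma eta1_mk (m : M₁) :
    eta1 M M₁ M₀ hd hact hdec₁ huniq₁ hdec₀ (LieSubmodule.Quotient.mk (m : L₁)) =
      LieSubmodule.Quotient.mk m := by
  have h : LieSubmodule.Quotient.mk (N := M.fix) (m : L₁)
      = (LieEquiv.ofBijective _ (theta1_bij M M₁ hdec₁ huniq₁)) m := rfl
  show (LieEquiv.ofBijective _ (phi1_bij M M₁ M₀ hd hact hdec₀ huniq₁))
      ((LieEquiv.ofBijective _ (theta1_bij M M₁ hdec₁ huniq₁)).symm
        (LieSubmodule.Quotient.mk (m : L₁))) = _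
  rw [h, LieEquiv.symm_apply_apply]
  rfl

lemma eta0_mk (m : M₀) :
    eta0 M M₁ M₀ hd hact hdec₁ hdec₀ huniq₀ (LieSubmodule.Quotient.mk (m : L₀)) =
      LieSubmodule.Quotient.mk m := by
  have h : LieSubmodule.Quotient.mk (N := M.stz) (m : L₀)
      = (LieEquiv.ofBijective _ (theta0_bij M M₀ hdec₀ huniq₀)) m := rfl
  show (LieEquiv.ofBijective _ (phi0_bij M M₁ M₀ hd hact hdec₁ hdec₀ huniq₀))
      ((LieEquiv.ofBijective _ (theta0_bij M M₀ hdec₀ huniq₀)).symm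
        (LieSubmodule.Quotient.mk (m : L₀))) = _
  rw [h, LieEquiv.symm_apply_apply]
  rfl

include hdec₀ huniq₁ in
lemma rmk1_inj {u v : M₁}
    (h : LieSubmodule.Quotient.mk (N := (M.restrict M₁ M₀ hd hact).fix) u
      = LieSubmodule.Quotient.mk v) : u = v :=
  sub_eq_zero.mp (restrict_fix_eq_zero M M₁ M₀ hd hact hdec₀ huniq₁
    ((Submodule.Quotient.eq _).mp h))

include hdec₁ hdec₀ huniq₀ in
lemma rmk0_inj {u v : M₀}
    (h : LieSubmodule.Quotient.mk (N := (M.restrict M₁ M₀ hd hact).stz) u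
      = LieSubmodule.Quotient.mk v) : u = v :=
  sub_eq_zero.mp (restrict_stz_eq_zero M M₁ M₀ hd hact hdec₁ hdec₀ huniq₀
    ((Submodule.Quotient.eq _).mp h))

lemma mk1_dec {a m z : L₁} (hz : z ∈ M.fix) (hdec : a = m + z) :
    LieSubmodule.Quotient.mk (N := M.fix) a = LieSubmodule.Quotient.mk m := by
  subst hdec
  apply (Submodule.Quotient.eq _).mpr
  show m + z - m ∈ M.fix
  have h : m + z - m = z := by abel
  rw [h]; exact hz

lemma mk0_dec {x m z : L₀} (hz : z ∈ M.stz) (hdec : x = m + z) :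
    LieSubmodule.Quotient.mk (N := M.stz) x = LieSubmodule.Quotient.mk m := by
  subst hdec
  apply (Submodule.Quotient.eq _).mpr
  show m + z - m ∈ M.stz
  have h : m + z - m = z := by abel
  rw [h]; exact hz

end IsoclinicAux3
section IsoclinicAux4

variable {K L₁ L₀ : Type*} [Field K] [LieRing L₁] [LieAlgebra K L₁]
  [LieRing L₀] [LieAlgebra K L₀] (M : LieCM K L₁ L₀)
  (M₁ : LieSubalgebra K L₁) (M₀ : LieSubalgebra K L₀)
  (hd : ∀ a ∈ M₁, M.d a ∈ M₀) (hact : ∀ x ∈ M₀, ∀ a ∈ M₁, M.act x a ∈ M₁)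
  (hdec₁ : ∀ a : L₁, ∃ m z, m ∈ M₁ ∧ z ∈ M.fix ∧ a = m + z)
  (hdec₀ : ∀ x : L₀, ∃ m z, m ∈ M₀ ∧ z ∈ M.stz ∧ x = m + z)

include hact hdec₁ hdec₀ in
lemma disp_le : M.disp ≤ M₁ := by
  apply LieSubalgebra.lieSpan_le.mpr
  rintro b ⟨x, a, rfl⟩
  obtain ⟨m₀, z₀, hm₀, hz₀, rfl⟩ := hdec₀ x
  obtain ⟨m₁, z₁, hm₁, hz₁, rfl⟩ := hdec₁ a
  rw [key_act M hz₀ hz₁]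
  exact hact m₀ hm₀ m₁ hm₁

include hdec₀ in
lemma der_le : M.der₀ ≤ M₀ := by
  apply LieSubalgebra.lieSpan_le.mpr
  rintro c ⟨x, y, rfl⟩
  obtain ⟨m₀, z₀, hm₀, hz₀, rfl⟩ := hdec₀ x
  obtain ⟨n₀, w₀, hn₀, hw₀, rfl⟩ := hdec₀ y
  rw [key_lie M hz₀ hw₀]
  exact M₀.lie_mem hm₀ hn₀

include hdec₁ hdec₀ in
lemma mem_disp_restrict {a : L₁} (h : a ∈ M.disp) (hm : a ∈ M₁) :
    (⟨a, hm⟩ : M₁) ∈ (M.restrict M₁ M₀ hd hact).disp := by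
  have hle : M.disp ≤ LieSubalgebra.map M₁.incl (M.restrict M₁ M₀ hd hact).disp := by
    apply LieSubalgebra.lieSpan_le.mpr
    rintro b ⟨x, a, rfl⟩
    obtain ⟨m₀, z₀, hm₀, hz₀, rfl⟩ := hdec₀ x
    obtain ⟨m₁, z₁, hm₁, hz₁, rfl⟩ := hdec₁ a
    rw [key_act M hz₀ hz₁]
    exact (LieSubalgebra.mem_map _ _ _).mpr
      ⟨(M.restrict M₁ M₀ hd hact).act ⟨m₀, hm₀⟩ ⟨m₁, hm₁⟩,
        LieSubalgebra.subset_lieSpan ⟨⟨m₀, hm₀⟩, ⟨m₁, hm₁⟩, rfl⟩, rfl⟩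
  obtain ⟨y, hy, hya⟩ := (LieSubalgebra.mem_map _ _ _).mp (hle h)
  have : (⟨a, hm⟩ : M₁) = y := Subtype.ext hya.symm
  rw [this]; exact hy

lemma disp_restrict_le {b : M₁} (hb : b ∈ (M.restrict M₁ M₀ hd hact).disp) :
    (b : L₁) ∈ M.disp := by
  have hle : (M.restrict M₁ M₀ hd hact).disp ≤ LieSubalgebra.comap M₁.incl M.disp := by
    apply LieSubalgebra.lieSpan_le.mpr
    rintro c ⟨x, a, rfl⟩
    show M₁.incl ((M.restrict M₁ M₀ hd hact).act x a) ∈ M.disp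
    exact LieSubalgebra.subset_lieSpan ⟨(x : L₀), (a : L₁), rfl⟩
  exact hle hb

include hdec₀ in
lemma mem_der_restrict {x : L₀} (h : x ∈ M.der₀) (hm : x ∈ M₀) :
    (⟨x, hm⟩ : M₀) ∈ (M.restrict M₁ M₀ hd hact).der₀ := by
  have hle : M.der₀ ≤ LieSubalgebra.map M₀.incl (M.restrict M₁ M₀ hd hact).der₀ := by
    apply LieSubalgebra.lieSpan_le.mpr
    rintro c ⟨x, y, rfl⟩
    obtain ⟨m₀, z₀, hm₀, hz₀, rfl⟩ := hdec₀ x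
    obtain ⟨n₀, w₀, hn₀, hw₀, rfl⟩ := hdec₀ y
    rw [key_lie M hz₀ hw₀]
    exact (LieSubalgebra.mem_map _ _ _).mpr
      ⟨⁅(⟨m₀, hm₀⟩ : M₀), (⟨n₀, hn₀⟩ : M₀)⁆,
        LieSubalgebra.subset_lieSpan ⟨⟨m₀, hm₀⟩, ⟨n₀, hn₀⟩, rfl⟩, rfl⟩
  obtain ⟨y, hy, hya⟩ := (LieSubalgebra.mem_map _ _ _).mp (hle h)
  have : (⟨x, hm⟩ : M₀) = y := Subtype.ext hya.symm
  rw [this]; exact hy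

lemma der_restrict_le {b : M₀} (hb : b ∈ (M.restrict M₁ M₀ hd hact).der₀) :
    (b : L₀) ∈ M.der₀ := by
  have hle : (M.restrict M₁ M₀ hd hact).der₀ ≤ LieSubalgebra.comap M₀.incl M.der₀ := by
    apply LieSubalgebra.lieSpan_le.mpr
    rintro c ⟨x, y, rfl⟩
    show M₀.incl ⁅x, y⁆ ∈ M.der₀
    exact LieSubalgebra.subset_lieSpan ⟨(x : L₀), (y : L₀), rfl⟩
  exact hle hb

/-- The equivalence between the displacement subalgebras. -/
def xi1 : M.disp ≃ₗ⁅K⁆ (M.restrict M₁ M₀ hd hact).disp where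
  toFun a := ⟨⟨(a : L₁), disp_le M M₁ M₀ hact hdec₁ hdec₀ a.2⟩,
    mem_disp_restrict M M₁ M₀ hd hact hdec₁ hdec₀ a.2 _⟩
  invFun b := ⟨((b : M₁) : L₁), disp_restrict_le M M₁ M₀ hd hact b.2⟩
  map_add' _ _ := rfl
  map_smul' _ _ := rfl
  map_lie' := rfl
  left_inv _ := rfl
  right_inv _ := rfl

/-- The equivalence between the derived subalgebras. -/
def xi0 : M.der₀ ≃ₗ⁅K⁆ (M.restrict M₁ M₀ hd hact).der₀ where
  toFun x := ⟨⟨(x : L₀), der_le M M₀ hdec₀ x.2⟩,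
    mem_der_restrict M M₁ M₀ hd hact hdec₀ x.2 _⟩
  invFun b := ⟨((b : M₀) : L₀), der_restrict_le M M₁ M₀ hd hact b.2⟩
  map_add' _ _ := rfl
  map_smul' _ _ := rfl
  map_lie' := rfl
  left_inv _ := rfl
  right_inv _ := rfl

end IsoclinicAux4
theorem isoclinic_of_direct_sum_center {K L₁ L₀ : Type*} [Field K] [LieRing L₁] [LieAlgebra K L₁]
    [LieRing L₀] [LieAlgebra K L₀] (M : LieCM K L₁ L₀)
    (M₁ : LieSubalgebra K L₁) (M₀ : LieSubalgebra K L₀)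
    (hd : ∀ a ∈ M₁, M.d a ∈ M₀) (hact : ∀ x ∈ M₀, ∀ a ∈ M₁, M.act x a ∈ M₁)
    (hdec₁ : ∀ a : L₁, ∃ m z, m ∈ M₁ ∧ z ∈ M.fix ∧ a = m + z)
    (huniq₁ : ∀ a ∈ M₁, a ∈ M.fix → a = 0)
    (hdec₀ : ∀ x : L₀, ∃ m z, m ∈ M₀ ∧ z ∈ M.stz ∧ x = m + z)
    (huniq₀ : ∀ x ∈ M₀, x ∈ M.stz → x = 0) :
    Nonempty (M.Isoclinism (M.restrict M₁ M₀ hd hact)) := by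
  refine ⟨{
    η₁ := eta1 M M₁ M₀ hd hact hdec₁ huniq₁ hdec₀
    η₀ := eta0 M M₁ M₀ hd hact hdec₁ hdec₀ huniq₀
    ξ₁ := xi1 M M₁ M₀ hd hact hdec₁ hdec₀
    ξ₀ := xi0 M M₁ M₀ hd hact hdec₀
    η_d := ?_, η_act := ?_, ξ_d := ?_, ξ_act := ?_, comm₁ := ?_, comm₀ := ?_ }⟩
  · -- η_d
    intro a a' h
    obtain ⟨m, z, hm, hz, hdec⟩ := hdec₁ a
    have h2 : eta1 M M₁ M₀ hd hact hdec₁ huniq₁ hdec₀ (LieSubmodule.Quotient.mk a)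
        = LieSubmodule.Quotient.mk (⟨m, hm⟩ : M₁) := by
      rw [mk1_dec M hz hdec]
      exact eta1_mk M M₁ M₀ hd hact hdec₁ huniq₁ hdec₀ ⟨m, hm⟩
    have ha' : (⟨m, hm⟩ : M₁) = a' :=
      rmk1_inj M M₁ M₀ hd hact huniq₁ hdec₀ (h2.symm.trans h)
    have hda : M.d a = M.d m + M.d z := by rw [hdec, map_add]
    rw [mk0_dec M (M.d_fix_mem_stz_s12 hz) hda, ← ha']
    exact eta0_mk M M₁ M₀ hd hact hdec₁ hdec₀ huniq₀ ⟨M.d m, hd m hm⟩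
  · -- η_act
    intro x a x' a' hx ha
    obtain ⟨m₀, z₀, hm₀, hz₀, hdx⟩ := hdec₀ x
    obtain ⟨m₁, z₁, hm₁, hz₁, hda⟩ := hdec₁ a
    have hx2 : eta0 M M₁ M₀ hd hact hdec₁ hdec₀ huniq₀ (LieSubmodule.Quotient.mk x)
        = LieSubmodule.Quotient.mk (⟨m₀, hm₀⟩ : M₀) := by
      rw [mk0_dec M hz₀ hdx]
      exact eta0_mk M M₁ M₀ hd hact hdec₁ hdec₀ huniq₀ ⟨m₀, hm₀⟩
    have ha2 : eta1 M M₁ M₀ hd hact hdec₁ huniq₁ hdec₀ (LieSubmodule.Quotient.mk a)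
        = LieSubmodule.Quotient.mk (⟨m₁, hm₁⟩ : M₁) := by
      rw [mk1_dec M hz₁ hda]
      exact eta1_mk M M₁ M₀ hd hact hdec₁ huniq₁ hdec₀ ⟨m₁, hm₁⟩
    have hx' : (⟨m₀, hm₀⟩ : M₀) = x' :=
      rmk0_inj M M₁ M₀ hd hact hdec₁ hdec₀ huniq₀ (hx2.symm.trans hx)
    have ha' : (⟨m₁, hm₁⟩ : M₁) = a' :=
      rmk1_inj M M₁ M₀ hd hact huniq₁ hdec₀ (ha2.symm.trans ha)
    have hkey : M.act x a = M.act m₀ m₁ := by rw [hdx, hda, key_act M hz₀ hz₁]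
    rw [hkey, ← hx', ← ha']
    exact eta1_mk M M₁ M₀ hd hact hdec₁ huniq₁ hdec₀ ⟨M.act m₀ m₁, hact m₀ hm₀ m₁ hm₁⟩
  · -- ξ_d
    intro a ha h
    rfl
  · -- ξ_act
    intro x a hx ha h
    rfl
  · -- comm₁
    intro x a x' a' h hx ha
    obtain ⟨m₀, z₀, hm₀, hz₀, hdx⟩ := hdec₀ x
    obtain ⟨m₁, z₁, hm₁, hz₁, hda⟩ := hdec₁ a
    have hx2 : eta0 M M₁ M₀ hd hact hdec₁ hdec₀ huniq₀ (LieSubmodule.Quotient.mk x)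
        = LieSubmodule.Quotient.mk (⟨m₀, hm₀⟩ : M₀) := by
      rw [mk0_dec M hz₀ hdx]
      exact eta0_mk M M₁ M₀ hd hact hdec₁ hdec₀ huniq₀ ⟨m₀, hm₀⟩
    have ha2 : eta1 M M₁ M₀ hd hact hdec₁ huniq₁ hdec₀ (LieSubmodule.Quotient.mk a)
        = LieSubmodule.Quotient.mk (⟨m₁, hm₁⟩ : M₁) := by
      rw [mk1_dec M hz₁ hda]
      exact eta1_mk M M₁ M₀ hd hact hdec₁ huniq₁ hdec₀ ⟨m₁, hm₁⟩
    have hx' : (⟨m₀, hm₀⟩ : M₀) = x' :=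
      rmk0_inj M M₁ M₀ hd hact hdec₁ hdec₀ huniq₀ (hx2.symm.trans hx)
    have ha' : (⟨m₁, hm₁⟩ : M₁) = a' :=
      rmk1_inj M M₁ M₀ hd hact huniq₁ hdec₀ (ha2.symm.trans ha)
    rw [← hx', ← ha']
    exact Subtype.ext (show M.act x a = M.act m₀ m₁ by rw [hdx, hda, key_act M hz₀ hz₁])
  · -- comm₀
    intro x y x' y' h hx hy
    obtain ⟨m₀, z₀, hm₀, hz₀, hdx⟩ := hdec₀ x
    obtain ⟨n₀, w₀, hn₀, hw₀, hdy⟩ := hdec₀ y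
    have hx2 : eta0 M M₁ M₀ hd hact hdec₁ hdec₀ huniq₀ (LieSubmodule.Quotient.mk x)
        = LieSubmodule.Quotient.mk (⟨m₀, hm₀⟩ : M₀) := by
      rw [mk0_dec M hz₀ hdx]
      exact eta0_mk M M₁ M₀ hd hact hdec₁ hdec₀ huniq₀ ⟨m₀, hm₀⟩
    have hy2 : eta0 M M₁ M₀ hd hact hdec₁ hdec₀ huniq₀ (LieSubmodule.Quotient.mk y)
        = LieSubmodule.Quotient.mk (⟨n₀, hn₀⟩ : M₀) := by
      rw [mk0_dec M hw₀ hdy]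
      exact eta0_mk M M₁ M₀ hd hact hdec₁ hdec₀ huniq₀ ⟨n₀, hn₀⟩
    have hx' : (⟨m₀, hm₀⟩ : M₀) = x' :=
      rmk0_inj M M₁ M₀ hd hact hdec₁ hdec₀ huniq₀ (hx2.symm.trans hx)
    have hy' : (⟨n₀, hn₀⟩ : M₀) = y' :=
      rmk0_inj M M₁ M₀ hd hact hdec₁ hdec₀ huniq₀ (hy2.symm.trans hy)
    rw [← hx', ← hy']
    exact Subtype.ext (show ⁅x, y⁆ = ⁅m₀, n₀⁆ by rw [hdx, hdy, key_lie M hz₀ hw₀])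
end

section
/- If L : L₁ → L₀ and L' : L₁' → L₀' are isoclinic Lie crossed modules and both are aspherical (the boundary maps are injective), then the Lie algebras L₀ and L₀' are isoclinic, i.e., there exist isomorphisms η : L₀/Z(L₀) → L₀'/Z(L₀') and ξ : [L₀,L₀] → [L₀',L₀'] with ξ([x,y]) = [η(x̄), η(ȳ)]-lift, commuting with the commutator maps. -/
/-- The derived subalgebra `[g, g]` of a Lie algebra, as the span of brackets. -/
def derivedSub (K g : Type*) [Field K] [LieRing g] [LieAlgebra K g] : LieSubalgebra K g :=
  LieSubalgebra.lieSpan K g {x | ∃ a b : g, x = ⁅a, b⁆}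

/-- An isoclinism between two Lie algebras: compatible isomorphisms between the
central quotients and the derived subalgebras. -/
structure LieAlgIsoclinism (K g h : Type*) [Field K] [LieRing g] [LieAlgebra K g]
    [LieRing h] [LieAlgebra K h] where
  η : (g ⧸ LieAlgebra.center K g) ≃ₗ⁅K⁆ (h ⧸ LieAlgebra.center K h)
  ξ : derivedSub K g ≃ₗ⁅K⁆ derivedSub K h
  comm : ∀ (x y : g) (x' y' : h) (hm : ⁅x, y⁆ ∈ derivedSub K g),
    η (LieSubmodule.Quotient.mk x) = LieSubmodule.Quotient.mk x' →
    η (LieSubmodule.Quotient.mk y) = LieSubmodule.Quotient.mk y' →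
    (ξ ⟨⁅x, y⁆, hm⟩ : h) = ⁅x', y'⁆

lemma lieAlgIsoclinism_aux {K g h : Type*} [Field K] [LieRing g] [LieAlgebra K g]
    [LieRing h] [LieAlgebra K h] (I : LieIdeal K g) (J : LieIdeal K h)
    (hI : I = LieAlgebra.center K g) (hJ : J = LieAlgebra.center K h)
    (η : (g ⧸ I) ≃ₗ⁅K⁆ (h ⧸ J)) (ξ : derivedSub K g ≃ₗ⁅K⁆ derivedSub K h)
    (comm : ∀ (x y : g) (x' y' : h) (hm : ⁅x, y⁆ ∈ derivedSub K g),
      η (LieSubmodule.Quotient.mk x) = LieSubmodule.Quotient.mk x' →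
      η (LieSubmodule.Quotient.mk y) = LieSubmodule.Quotient.mk y' →
      (ξ ⟨⁅x, y⁆, hm⟩ : h) = ⁅x', y'⁆) :
    Nonempty (LieAlgIsoclinism K g h) := by
  subst hI; subst hJ
  exact ⟨⟨η, ξ, comm⟩⟩

lemma LieCM.stz_eq_center {K L₁ L₀ : Type*} [Field K] [LieRing L₁] [LieAlgebra K L₁]
    [LieRing L₀] [LieAlgebra K L₀] (M : LieCM K L₁ L₀)
    (hasp : Function.Injective M.d) : M.stz = LieAlgebra.center K L₀ := by
  ext x
  constructor
  · rintro ⟨-, hx2⟩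
    intro y
    rw [← lie_skew, hx2 y, neg_zero]
  · intro hx
    refine ⟨fun m => ?_, fun y => by rw [← lie_skew, hx y, neg_zero]⟩
    apply hasp
    rw [M.d_act, map_zero, ← lie_skew, hx (M.d m), neg_zero]

theorem base_isoclinic_of_aspherical
    {K L₁ L₀ L₁' L₀' : Type*} [Field K]
    [LieRing L₁] [LieAlgebra K L₁] [LieRing L₀] [LieAlgebra K L₀]
    [LieRing L₁'] [LieAlgebra K L₁'] [LieRing L₀'] [LieAlgebra K L₀']
    (M : LieCM K L₁ L₀) (M' : LieCM K L₁' L₀')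
    (h : Nonempty (M.Isoclinism M'))
    (hasp : Function.Injective M.d) (hasp' : Function.Injective M'.d) :
    Nonempty (LieAlgIsoclinism K L₀ L₀') := by
  obtain ⟨I⟩ := h
  exact lieAlgIsoclinism_aux M.stz M'.stz (M.stz_eq_center hasp) (M'.stz_eq_center hasp')
    I.η₀ I.ξ₀ (fun x y x' y' hm hx hy => I.comm₀ x y x' y' hm hx hy)
end

section
/- If L : L₁ → L₀ and L' : L₁' → L₀' are isoclinic Lie crossed modules and both are simply connected (the boundary maps are surjective), then the Lie algebras L₁ and L₁' are isoclinic. -/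
section Aux

variable {K L₁ L₀ : Type*} [Field K] [LieRing L₁] [LieAlgebra K L₁]
  [LieRing L₀] [LieAlgebra K L₀]

/-- Quotients by equal Lie ideals are equivalent. -/
def lieQuotEquivOfEq {N N' : LieIdeal K L₁} (h : N = N') :
    (L₁ ⧸ N) ≃ₗ⁅K⁆ (L₁ ⧸ N') := by subst h; exact LieEquiv.refl

@[simp] lemma lieQuotEquivOfEq_mk {N N' : LieIdeal K L₁} (h : N = N') (a : L₁) :
    lieQuotEquivOfEq h (LieSubmodule.Quotient.mk a) = LieSubmodule.Quotient.mk a := by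
  subst h; rfl

lemma LieCM.fix_eq_center (M : LieCM K L₁ L₀) (hsc : Function.Surjective M.d) :
    M.fix = LieAlgebra.center K L₁ := by
  ext m
  rw [LieModule.mem_maxTrivSubmodule]
  constructor
  · intro hm a
    rw [← M.peiffer]; exact hm (M.d a)
  · intro hm x
    obtain ⟨a, rfl⟩ := hsc x
    rw [M.peiffer]; exact hm a

lemma LieCM.disp_eq_derived (M : LieCM K L₁ L₀) (hsc : Function.Surjective M.d) :
    M.disp = derivedSub K L₁ := by
  unfold LieCM.disp derivedSub
  congr 1
  ext m
  constructor
  · rintro ⟨x, a, rfl⟩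
    obtain ⟨b, rfl⟩ := hsc x
    exact ⟨b, a, M.peiffer b a⟩
  · rintro ⟨a, b, rfl⟩
    exact ⟨M.d a, b, (M.peiffer a b).symm⟩

end Aux

theorem top_isoclinic_of_simplyConnected
    {K L₁ L₀ L₁' L₀' : Type*} [Field K]
    [LieRing L₁] [LieAlgebra K L₁] [LieRing L₀] [LieAlgebra K L₀]
    [LieRing L₁'] [LieAlgebra K L₁'] [LieRing L₀'] [LieAlgebra K L₀']
    (M : LieCM K L₁ L₀) (M' : LieCM K L₁' L₀')
    (h : Nonempty (M.Isoclinism M'))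
    (hsc : Function.Surjective M.d) (hsc' : Function.Surjective M'.d) :
    Nonempty (LieAlgIsoclinism K L₁ L₁') := by
  obtain ⟨I⟩ := h
  have hfix : M.fix = LieAlgebra.center K L₁ := M.fix_eq_center hsc
  have hfix' : M'.fix = LieAlgebra.center K L₁' := M'.fix_eq_center hsc'
  have hdisp : M.disp = derivedSub K L₁ := M.disp_eq_derived hsc
  have hdisp' : M'.disp = derivedSub K L₁' := M'.disp_eq_derived hsc'
  refine ⟨{
    η := (lieQuotEquivOfEq hfix.symm).trans (I.η₁.trans (lieQuotEquivOfEq hfix'))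
    ξ := (LieEquiv.ofEq _ _ (by rw [hdisp])).trans
      (I.ξ₁.trans (LieEquiv.ofEq _ _ (by rw [hdisp'])))
    comm := ?_ }⟩
  intro x y x' y' hm hx hy
  simp only [LieEquiv.trans_apply, lieQuotEquivOfEq_mk] at hx hy
  have hx1 : I.η₁ (LieSubmodule.Quotient.mk x) = LieSubmodule.Quotient.mk x' := by
    rw [← lieQuotEquivOfEq_mk hfix' x'] at hx
    exact (lieQuotEquivOfEq hfix').injective hx
  have hy1 : I.η₁ (LieSubmodule.Quotient.mk y) = LieSubmodule.Quotient.mk y' := by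
    rw [← lieQuotEquivOfEq_mk hfix' y'] at hy
    exact (lieQuotEquivOfEq hfix').injective hy
  have hd : I.η₀ (LieSubmodule.Quotient.mk (M.d x)) = LieSubmodule.Quotient.mk (M'.d x') :=
    I.η_d x x' hx1
  have hmem : M.act (M.d x) y ∈ M.disp := by
    rw [M.peiffer, hdisp]; exact hm
  have key := I.comm₁ (M.d x) y (M'.d x') y' hmem hd hy1
  rw [M'.peiffer] at key
  have heq : (⟨M.act (M.d x) y, hmem⟩ : M.disp) =
      (LieEquiv.ofEq _ _ (by rw [hdisp] : ((derivedSub K L₁ : LieSubalgebra K L₁) : Set L₁) = M.disp)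
        ⟨⁅x, y⁆, hm⟩) := by
    apply Subtype.ext
    rw [LieEquiv.ofEq_apply]
    exact M.peiffer x y
  rw [heq] at key
  rw [LieEquiv.trans_apply, LieEquiv.trans_apply, LieEquiv.ofEq_apply]
  exact key
end

section
/- For any Lie algebra g and ideal I of g satisfying I + Z(g) = g, the inclusion crossed module I ↪ g is isoclinic to the identity crossed module g → g. -/
/-- The identity crossed module `g → g` with the adjoint action. -/
def LieCM.idCM (K g : Type*) [Field K] [LieRing g] [LieAlgebra K g] : LieCM K g g where
  d := LieHom.id
  act := LinearMap.mk₂ K (fun x m => ⁅x, m⁆) add_lie smul_lie lie_add lie_smul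
  act_lie₀ := fun x y m => by
    simp only [LinearMap.mk₂_apply]; exact lie_lie x y m
  act_lie₁ := fun x a b => by
    simp only [LinearMap.mk₂_apply]; exact leibniz_lie x a b
  d_act := fun x m => rfl
  peiffer := fun a b => rfl

/-- The inclusion crossed module `I ↪ g` of an ideal with the adjoint action. -/
def LieCM.inclCM (K : Type*) {g : Type*} [Field K] [LieRing g] [LieAlgebra K g]
    (I : LieIdeal K g) : LieCM K I g where
  d := (I : LieSubalgebra K g).incl
  act := LinearMap.mk₂ K (fun x m => ⟨⁅x, (m : g)⁆, I.lie_mem m.2⟩)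
    (fun x y m => Subtype.ext (by simp [add_lie]))
    (fun c x m => Subtype.ext (by simp [smul_lie]))
    (fun x m n => Subtype.ext (by simp [lie_add]))
    (fun c x m => Subtype.ext (by simp [lie_smul]))
  act_lie₀ := fun x y m => Subtype.ext (by
    simp only [LinearMap.mk₂_apply, AddSubgroupClass.coe_sub]; exact lie_lie x y m.1)
  act_lie₁ := fun x a b => Subtype.ext (by
    simp only [LinearMap.mk₂_apply, AddMemClass.coe_add, LieIdeal.coe_bracket_of_module]
    exact leibniz_lie x a.1 b.1)
  d_act := fun x m => rfl
  peiffer := fun a b => Subtype.ext rfl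

section Helpers

variable {K A B : Type*} [Field K] [LieRing A] [LieAlgebra K A] [LieRing B] [LieAlgebra K B]

lemma mk_eq_mk_iff (N : LieIdeal K A) (a b : A) :
    (LieSubmodule.Quotient.mk (N := N) a = LieSubmodule.Quotient.mk b) ↔ a - b ∈ N :=
  Submodule.Quotient.eq _

/-- Lift a Lie algebra morphism to an equivalence of quotients. -/
noncomputable def quotLieEquiv (f : A →ₗ⁅K⁆ B) (N : LieIdeal K A) (N' : LieIdeal K B)
    (hmem : ∀ a, a ∈ N ↔ f a ∈ N')
    (hsurj : ∀ b : B, ∃ a : A, f a - b ∈ N') :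
    (A ⧸ N) ≃ₗ⁅K⁆ (B ⧸ N') := by
  refine LieEquiv.ofBijective
    { toLinearMap := Submodule.mapQ N.toSubmodule N'.toSubmodule (f : A →ₗ[K] B)
        (fun a ha => (hmem a).1 ha)
      map_lie' := ?_ } ⟨?_, ?_⟩
  · intro x y
    obtain ⟨a, rfl⟩ := Submodule.Quotient.mk_surjective _ x
    obtain ⟨b, rfl⟩ := Submodule.Quotient.mk_surjective _ y
    have h1 : (⁅LieSubmodule.Quotient.mk (N := N) a, LieSubmodule.Quotient.mk (N := N) b⁆ : A ⧸ N)
        = LieSubmodule.Quotient.mk ⁅a, b⁆ := (LieSubmodule.Quotient.mk_bracket N a b).symm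
    rw [show (Submodule.Quotient.mk a : A ⧸ N.toSubmodule) = LieSubmodule.Quotient.mk (N := N) a from rfl,
      show (Submodule.Quotient.mk b : A ⧸ N.toSubmodule) = LieSubmodule.Quotient.mk (N := N) b from rfl,
      h1]
    show (LieSubmodule.Quotient.mk (N := N') (f ⁅a, b⁆) : B ⧸ N')
        = ⁅(LieSubmodule.Quotient.mk (N := N') (f a) : B ⧸ N'),
            (LieSubmodule.Quotient.mk (N := N') (f b) : B ⧸ N')⁆
    rw [f.map_lie a b]
    exact LieSubmodule.Quotient.mk_bracket N' (f a) (f b)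
  · intro x y hxy
    obtain ⟨a, rfl⟩ := Submodule.Quotient.mk_surjective _ x
    obtain ⟨b, rfl⟩ := Submodule.Quotient.mk_surjective _ y
    have h : Submodule.Quotient.mk (p := N'.toSubmodule) (f a)
        = Submodule.Quotient.mk (f b) := hxy
    rw [Submodule.Quotient.eq] at h
    rw [← map_sub f] at h
    apply (Submodule.Quotient.eq _).2
    exact (hmem (a - b)).2 h
  · intro y
    obtain ⟨b, rfl⟩ := Submodule.Quotient.mk_surjective _ y
    obtain ⟨a, ha⟩ := hsurj b
    exact ⟨Submodule.Quotient.mk a, (Submodule.Quotient.eq _).2 ha⟩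

lemma quotLieEquiv_mk (f : A →ₗ⁅K⁆ B) (N : LieIdeal K A) (N' : LieIdeal K B)
    (hmem : ∀ a, a ∈ N ↔ f a ∈ N') (hsurj : ∀ b : B, ∃ a : A, f a - b ∈ N') (a : A) :
    quotLieEquiv f N N' hmem hsurj (LieSubmodule.Quotient.mk a)
      = LieSubmodule.Quotient.mk (f a) := rfl

lemma bracket_congr {x x' a a' : A}
    (hx : ∀ y : A, ⁅x - x', y⁆ = 0) (ha : ∀ y : A, ⁅a - a', y⁆ = 0) :
    ⁅x, a⁆ = ⁅x', a'⁆ := by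
  have h1 := hx a
  have h2 := ha x'
  rw [sub_lie, sub_eq_zero] at h1
  rw [← lie_skew (a - a') x', lie_sub, neg_eq_zero, sub_eq_zero] at h2
  rw [h1, h2]

end Helpers

theorem inclusion_isoclinic_of_add_center
    {K g : Type*} [Field K] [LieRing g] [LieAlgebra K g]
    (I : LieIdeal K g)
    (hsum : ∀ x : g, ∃ i z, i ∈ I ∧ (∀ y : g, ⁅z, y⁆ = 0) ∧ x = i + z) :
    Nonempty ((LieCM.inclCM K I).Isoclinism (LieCM.idCM K g)) := by
  set M := LieCM.inclCM K I with hM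
  set M' := LieCM.idCM K g with hM'
  -- membership characterizations
  have hstz : ∀ x : g, x ∈ M.stz ↔ ∀ y : g, ⁅x, y⁆ = 0 := by
    intro x
    constructor
    · exact fun h => h.2
    · intro h
      refine ⟨fun m => Subtype.ext ?_, h⟩
      · show ⁅x, (m : g)⁆ = 0
        exact h m
  have hstz' : ∀ x : g, x ∈ M'.stz ↔ ∀ y : g, ⁅x, y⁆ = 0 := by
    intro x
    exact ⟨fun h => h.2, fun h => ⟨h, h⟩⟩
  have hfix : ∀ a : I, a ∈ M.fix ↔ ∀ y : g, ⁅y, (a : g)⁆ = 0 := by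
    intro a
    constructor
    · intro h y
      have := h y
      exact congrArg Subtype.val this
    · intro h y
      exact Subtype.ext (h y)
  have hfix' : ∀ a : g, a ∈ M'.fix ↔ ∀ y : g, ⁅y, a⁆ = 0 := by
    intro a; exact Iff.rfl
  -- the quotient equivalences
  have hmem₀ : ∀ x : g, x ∈ M.stz ↔ (LieHom.id : g →ₗ⁅K⁆ g) x ∈ M'.stz := by
    intro x; rw [hstz, hstz']; rfl
  have hsurj₀ : ∀ b : g, ∃ a : g, (LieHom.id : g →ₗ⁅K⁆ g) a - b ∈ M'.stz := by
    intro b; exact ⟨b, by simp⟩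
  let η₀ : (g ⧸ M.stz) ≃ₗ⁅K⁆ (g ⧸ M'.stz) := quotLieEquiv LieHom.id M.stz M'.stz hmem₀ hsurj₀
  have hmem₁ : ∀ a : I, a ∈ M.fix ↔ (I : LieSubalgebra K g).incl a ∈ M'.fix := by
    intro a; rw [hfix, hfix']; rfl
  have hsurj₁ : ∀ b : g, ∃ a : I, (I : LieSubalgebra K g).incl a - b ∈ M'.fix := by
    intro b
    obtain ⟨i, z, hi, hz, rfl⟩ := hsum b
    refine ⟨⟨i, hi⟩, ?_⟩
    rw [hfix']
    intro y
    show ⁅y, i - (i + z)⁆ = 0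
    have : i - (i + z) = -z := by abel
    rw [this, lie_neg, lie_skew, hz]
  let η₁ : (I ⧸ M.fix) ≃ₗ⁅K⁆ (g ⧸ M'.fix) :=
    quotLieEquiv (I : LieSubalgebra K g).incl M.fix M'.fix hmem₁ hsurj₁
  have hη₀mk : ∀ x : g, η₀ (LieSubmodule.Quotient.mk x) = LieSubmodule.Quotient.mk x :=
    fun x => rfl
  have hη₁mk : ∀ a : I,
      η₁ (LieSubmodule.Quotient.mk a) = LieSubmodule.Quotient.mk (a : g) := fun a => rfl
  -- the subalgebra equivalences
  have hdisp_le : ∀ a : I, a ∈ M.disp → (a : g) ∈ M'.disp := by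
    have h : M.disp ≤ M'.disp.comap (I : LieSubalgebra K g).incl := by
      apply LieSubalgebra.lieSpan_le.mpr
      rintro m ⟨x, a, rfl⟩
      show ((M.act x a : I) : g) ∈ M'.disp
      exact LieSubalgebra.subset_lieSpan ⟨x, (a : g), rfl⟩
    intro a ha
    exact h ha
  have hdisp_ge : M'.disp ≤ M.disp.map (I : LieSubalgebra K g).incl := by
    apply LieSubalgebra.lieSpan_le.mpr
    rintro m ⟨x, a, rfl⟩
    obtain ⟨i, z, hi, hz, rfl⟩ := hsum a
    have key : M'.act x (i + z) = ((M.act x ⟨i, hi⟩ : I) : g) := by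
      show ⁅x, i + z⁆ = ⁅x, i⁆
      have hxz : ⁅x, z⁆ = 0 := by rw [← lie_skew, hz, neg_zero]
      rw [lie_add, hxz, add_zero]
    rw [key]
    exact ⟨M.act x ⟨i, hi⟩, LieSubalgebra.subset_lieSpan ⟨x, ⟨i, hi⟩, rfl⟩, rfl⟩
  let φ : M.disp →ₗ⁅K⁆ M'.disp :=
    { toFun := fun a => ⟨((a : I) : g), hdisp_le a a.2⟩
      map_add' := fun a b => rfl
      map_smul' := fun c a => rfl
      map_lie' := fun {a b} => rfl }
  have hφbij : Function.Bijective φ := by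
    constructor
    · intro a b hab
      have h1 : ((φ a : M'.disp) : g) = ((φ b : M'.disp) : g) := congrArg Subtype.val hab
      exact Subtype.ext (Subtype.ext h1)
    · intro b
      obtain ⟨y, hy, hyb⟩ := hdisp_ge b.2
      exact ⟨⟨y, hy⟩, Subtype.ext hyb⟩
  let ξ₁ : M.disp ≃ₗ⁅K⁆ M'.disp := LieEquiv.ofBijective φ hφbij
  have hξ₁ : ∀ (a : I) (ha : a ∈ M.disp), ((ξ₁ ⟨a, ha⟩ : M'.disp) : g) = (a : g) :=
    fun a ha => rfl
  let ξ₀ : M.der₀ ≃ₗ⁅K⁆ M'.der₀ := LieEquiv.refl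
  -- central-difference facts
  have stz_diff : ∀ x x' : g,
      (LieSubmodule.Quotient.mk (N := M'.stz) x = LieSubmodule.Quotient.mk x') →
      ∀ y : g, ⁅x - x', y⁆ = 0 := by
    intro x x' h y
    exact ((hstz' _).1 ((mk_eq_mk_iff M'.stz x x').1 h)) y
  have fix_diff : ∀ a a' : g,
      (LieSubmodule.Quotient.mk (N := M'.fix) a = LieSubmodule.Quotient.mk a') →
      ∀ y : g, ⁅a - a', y⁆ = 0 := by
    intro a a' h y
    have := ((hfix' _).1 ((mk_eq_mk_iff M'.fix a a').1 h)) y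
    rw [← lie_skew, this, neg_zero]
  refine ⟨⟨η₁, η₀, ?_, ?_, ξ₁, ξ₀, ?_, ?_, ?_, ?_⟩⟩
  · -- η_d
    intro a a' h
    rw [hη₁mk] at h
    show η₀ (LieSubmodule.Quotient.mk ((a : I) : g)) = LieSubmodule.Quotient.mk a'
    rw [hη₀mk]
    apply (mk_eq_mk_iff _ _ _).2
    rw [hstz']
    intro y
    exact fix_diff _ _ h y
  · -- η_act
    intro x a x' a' hx ha
    rw [hη₀mk] at hx
    rw [hη₁mk] at ha
    show η₁ (LieSubmodule.Quotient.mk (M.act x a)) = LieSubmodule.Quotient.mk ⁅x', a'⁆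
    rw [hη₁mk]
    show LieSubmodule.Quotient.mk ⁅x, (a : g)⁆ = LieSubmodule.Quotient.mk ⁅x', a'⁆
    exact congrArg _ (bracket_congr (stz_diff _ _ hx) (fix_diff _ _ ha))
  · -- ξ_d
    intro a ha h
    rfl
  · -- ξ_act
    intro x a hx ha h
    rfl
  · -- comm₁
    intro x a x' a' h hx ha
    rw [hη₀mk] at hx
    rw [hη₁mk] at ha
    show ⁅x, (a : g)⁆ = ⁅x', a'⁆
    exact bracket_congr (stz_diff _ _ hx) (fix_diff _ _ ha)
  · -- comm₀
    intro x y x' y' h hx hy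
    rw [hη₀mk] at hx hy
    show ⁅x, y⁆ = ⁅x', y'⁆
    have hy' : ∀ m : g, ⁅y - y', m⁆ = 0 := stz_diff _ _ hy
    exact bracket_congr (stz_diff _ _ hx) hy'
end
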